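/- Instantiation overflow fails for Russell-Prawitz disjunction in atomic System F with primitive disjunction: there exist formulas A, B, C in the language with ⊃, ∨, ∀ (e.g. A = Y, B = Z, C = Y∨Z) such that (A⊃C)⊃(B⊃C)⊃C is not derivable from ∀X.(A⊃X)⊃(B⊃X)⊃X in NI²∨_at, i.e. ∀X.(A⊃X)⊃(B⊃X)⊃X ⊬ (A⊃C)⊃(B⊃C)⊃C. -/
import Mathlib


/-- Formulas of second-order propositional logic with primitive disjunction:
variables, ⊃, ∨, ∀. -/
inductive Fm : Type
  | var : ℕ → Fm
  | imp : Fm → Fm → Fm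
  | or  : Fm → Fm → Fm
  | all : ℕ → Fm → Fm
deriving DecidableEq

namespace Fm

/-- `Free X A`: the variable `X` occurs free in `A`. -/
def Free (X : ℕ) : Fm → Prop
  | var Y => X = Y
  | imp A B => Free X A ∨ Free X B
  | or A B => Free X A ∨ Free X B
  | all Y A => X ≠ Y ∧ Free X A

/-- Substitution of `C` for the free occurrences of `X`. -/
def subst (X : ℕ) (C : Fm) : Fm → Fm
  | var Y => if X = Y then C else var Y
  | imp A B => imp (subst X C A) (subst X C B)
  | or A B => or (subst X C A) (subst X C B)
  | all Y A => if X = Y then all Y A else all Y (subst X C A)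

/-- `C` is substitutable (free) for `X` in the given formula (no capture). -/
def FreeFor (C : Fm) (X : ℕ) : Fm → Prop
  | var _ => True
  | imp A B => FreeFor C X A ∧ FreeFor C X B
  | or A B => FreeFor C X A ∧ FreeFor C X B
  | all Y A => (¬ Free X (all Y A)) ∨ (¬ Free Y C ∧ FreeFor C X A)

end Fm

/-- Natural deduction for second-order propositional logic with primitive
disjunction (the system `NI²∨`).  When `atomic = true` the witness of
∀-elimination must be a variable: this is the system `NI²∨_at`. -/
inductive Deriv (atomic : Bool) : Set Fm → Fm → Prop
  | ax {Γ A} : A ∈ Γ → Deriv atomic Γ A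
  | impI {Γ A B} : Deriv atomic (insert A Γ) B → Deriv atomic Γ (.imp A B)
  | impE {Γ A B} : Deriv atomic Γ (.imp A B) → Deriv atomic Γ A → Deriv atomic Γ B
  | orI1 {Γ A B} : Deriv atomic Γ A → Deriv atomic Γ (.or A B)
  | orI2 {Γ A B} : Deriv atomic Γ B → Deriv atomic Γ (.or A B)
  | orE {Γ A B C} : Deriv atomic Γ (.or A B) →
      Deriv atomic (insert A Γ) C → Deriv atomic (insert B Γ) C →
      Deriv atomic Γ C
  | allI {Γ X A} : Deriv atomic Γ A → (∀ B ∈ Γ, ¬ Fm.Free X B) →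
      Deriv atomic Γ (.all X A)
  | allE {Γ X A C} : Deriv atomic Γ (.all X A) → Fm.FreeFor C X A →
      (atomic = true → ∃ Y, C = Fm.var Y) →
      Deriv atomic Γ (Fm.subst X C A)

namespace KM

/-- order on the 3-world Kripke frame: `0 ≤ 1`, `0 ≤ 2`. -/
def wle (w w' : Fin 3) : Bool := w == w' || w == 0

lemma wle_refl : ∀ w, wle w w = true := by decide

lemma wle_trans : ∀ {a b c : Fin 3}, wle a b = true → wle b c = true →
    wle a c = true := by decide

/-- Kripke forcing, Bool-valued; valuations take values in `Bool`,
`true` ↦ upset {1}, `false` ↦ upset {2}. -/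
def force (v : ℕ → Bool) : Fm → Fin 3 → Bool
  | .var n, w => if v n then w == 1 else w == 2
  | .imp A B, w =>
      (List.finRange 3).all fun w' => !(wle w w') || (!(force v A w') || force v B w')
  | .or A B, w => force v A w || force v B w
  | .all X A, w => force (Function.update v X true) A w &&
      force (Function.update v X false) A w

lemma force_imp {v : ℕ → Bool} {A B w} : force v (.imp A B) w = true ↔
    ∀ w', wle w w' = true → force v A w' = true → force v B w' = true := by
  simp only [force, List.all_eq_true, List.mem_finRange, true_implies]
  exact forall_congr' fun w' => by
    cases wle w w' <;> cases force v A w' <;> cases force v B w' <;> simp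

lemma force_or {v : ℕ → Bool} {A B w} : force v (.or A B) w = true ↔
    (force v A w = true ∨ force v B w = true) := by
  simp [force]

lemma force_all {v : ℕ → Bool} {X A w} : force v (.all X A) w = true ↔
    ∀ b, force (Function.update v X b) A w = true := by
  constructor
  · intro h b
    simp only [force, Bool.and_eq_true] at h
    cases b
    · exact h.2
    · exact h.1
  · intro h
    simp only [force, Bool.and_eq_true]
    exact ⟨h true, h false⟩

lemma mono {A : Fm} : ∀ {v : ℕ → Bool} {w w'}, wle w w' = true →
    force v A w = true → force v A w' = true := by
  induction A with
  | var n =>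
    intro v w w' h hf
    cases hv : v n <;> simp only [force, hv, if_true, if_false] at hf ⊢ <;>
      revert h <;> revert hf <;> revert w w' <;> decide
  | imp A B ihA ihB =>
    intro v w w' h hf
    rw [force_imp] at hf ⊢
    intro w'' h2 hA
    exact hf w'' (wle_trans h h2) hA
  | or A B ihA ihB =>
    intro v w w' h hf
    rw [force_or] at hf ⊢
    rcases hf with hf | hf
    · exact Or.inl (ihA h hf)
    · exact Or.inr (ihB h hf)
  | all X A ih =>
    intro v w w' h hf
    rw [force_all] at hf ⊢
    intro b; exact ih h (hf b)

lemma coincide {A : Fm} : ∀ {v v' : ℕ → Bool},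
    (∀ Y, Fm.Free Y A → v Y = v' Y) → ∀ w, force v A w = force v' A w := by
  induction A with
  | var n =>
    intro v v' h w
    rw [force, force, h n rfl]
  | imp A B ihA ihB =>
    intro v v' h w
    have hA := ihA fun Y hY => h Y (Or.inl hY)
    have hB := ihB fun Y hY => h Y (Or.inr hY)
    simp only [force, hA, hB]
  | or A B ihA ihB =>
    intro v v' h w
    have hA := ihA fun Y hY => h Y (Or.inl hY)
    have hB := ihB fun Y hY => h Y (Or.inr hY)
    simp only [force, hA, hB]
  | all X A ih =>
    intro v v' h w
    have key : ∀ b, force (Function.update v X b) A w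
        = force (Function.update v' X b) A w := by
      intro b
      apply ih ?_ w
      intro Y hY
      by_cases hXY : Y = X
      · subst hXY; simp [Function.update]
      · rw [Function.update_of_ne hXY, Function.update_of_ne hXY]
        exact h Y ⟨hXY, hY⟩
    rw [force, force, key true, key false]

lemma not_free_force {A : Fm} {v : ℕ → Bool} {X b w} (h : ¬ Fm.Free X A) :
    force (Function.update v X b) A w = force v A w := by
  apply coincide ?_ w
  intro Y hY
  have hne : Y ≠ X := fun e => h (e ▸ hY)
  exact Function.update_of_ne hne _ _

lemma not_free_subst {X : ℕ} {C : Fm} : ∀ {A : Fm}, ¬ Fm.Free X A →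
    Fm.subst X C A = A := by
  intro A
  induction A with
  | var n =>
    intro h
    have hne : X ≠ n := fun e => h e
    simp [Fm.subst, hne]
  | imp A B ihA ihB =>
    intro h
    rw [Fm.Free] at h; push_neg at h
    simp [Fm.subst, ihA h.1, ihB h.2]
  | or A B ihA ihB =>
    intro h
    rw [Fm.Free] at h; push_neg at h
    simp [Fm.subst, ihA h.1, ihB h.2]
  | all Z A ih =>
    intro h
    by_cases hXZ : X = Z
    · simp [Fm.subst, hXZ]
    · rw [Fm.Free] at h; push_neg at h
      simp [Fm.subst, hXZ, ih (h hXZ)]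

lemma subst_var {A : Fm} : ∀ {X Y : ℕ} {v : ℕ → Bool},
    Fm.FreeFor (.var Y) X A → ∀ w,
    force v (Fm.subst X (.var Y) A) w = force (Function.update v X (v Y)) A w := by
  induction A with
  | var n =>
    intro X Y v _ w
    by_cases h : X = n
    · subst h; simp [Fm.subst, force, Function.update]
    · simp [Fm.subst, h, force, Function.update_of_ne (Ne.symm h)]
  | imp A B ihA ihB =>
    intro X Y v hFF w
    rw [Fm.FreeFor] at hFF
    simp only [Fm.subst, force, ihA hFF.1, ihB hFF.2]
  | or A B ihA ihB =>
    intro X Y v hFF w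
    rw [Fm.FreeFor] at hFF
    simp only [Fm.subst, force, ihA hFF.1, ihB hFF.2]
  | all Z A ih =>
    intro X Y v hFF w
    by_cases hXZ : X = Z
    · subst hXZ
      rw [not_free_force (show ¬ Fm.Free X (Fm.all X A) by
        rw [Fm.Free]; exact fun h => h.1 rfl)]
      simp [Fm.subst]
    · rw [Fm.FreeFor] at hFF
      simp only [Fm.subst, if_neg hXZ]
      have key : ∀ b, force (Function.update v Z b) (Fm.subst X (.var Y) A) w
          = force (Function.update (Function.update v X (v Y)) Z b) A w := by
        intro b
        rcases hFF with hnf | ⟨hZY, hFF⟩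
        · rw [Fm.Free] at hnf; push_neg at hnf
          have hnfA : ¬ Fm.Free X A := hnf hXZ
          rw [not_free_subst hnfA, Function.update_comm hXZ, not_free_force hnfA]
        · rw [Fm.Free] at hZY
          have hYZ : Y ≠ Z := fun e => hZY e.symm
          rw [ih hFF, Function.update_of_ne hYZ, Function.update_comm hXZ]
      rw [force, force, key true, key false]

theorem soundness {Γ : Set Fm} {A : Fm} (h : Deriv true Γ A) :
    ∀ (v : ℕ → Bool) (w : Fin 3), (∀ B ∈ Γ, force v B w = true) →
      force v A w = true := by
  induction h with
  | ax hmem => intro v w hΓ; exact hΓ _ hmem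
  | impI _ ih =>
    intro v w hΓ
    rw [force_imp]
    intro w' hle hA
    apply ih v w'
    intro B hB
    rcases hB with hB | hB
    · subst hB; exact hA
    · exact mono hle (hΓ B hB)
  | impE _ _ ih1 ih2 =>
    intro v w hΓ
    have h1 := ih1 v w hΓ
    rw [force_imp] at h1
    exact h1 w (wle_refl w) (ih2 v w hΓ)
  | orI1 _ ih =>
    intro v w hΓ
    rw [force_or]; exact Or.inl (ih v w hΓ)
  | orI2 _ ih =>
    intro v w hΓ
    rw [force_or]; exact Or.inr (ih v w hΓ)
  | orE _ _ _ ih ih1 ih2 =>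
    intro v w hΓ
    have h := ih v w hΓ
    rw [force_or] at h
    rcases h with h | h
    · exact ih1 v w fun B hB => by
        rcases hB with hB | hB
        · subst hB; exact h
        · exact hΓ B hB
    · exact ih2 v w fun B hB => by
        rcases hB with hB | hB
        · subst hB; exact h
        · exact hΓ B hB
  | @allI Γ X A _ hfree ih =>
    intro v w hΓ
    rw [force_all]
    intro b
    apply ih (Function.update v X b) w
    intro B hB
    rw [not_free_force (hfree B hB)]
    exact hΓ B hB
  | @allE Γ X A C _ hFF hat ih =>
    intro v w hΓ
    obtain ⟨Y, rfl⟩ := hat rfl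
    rw [subst_var hFF]
    have h := ih v w hΓ
    rw [force_all] at h
    exact h (v Y)

end KM

/-- Failure of instantiation overflow for Russell-Prawitz disjunction in
atomic System F with primitive disjunction: there are formulas `A`, `B`, `C`
(e.g. `A = Y`, `B = Z`, `C = Y∨Z`) such that
`∀X.(A⊃X)⊃(B⊃X)⊃X ⊬ (A⊃C)⊃(B⊃C)⊃C` in `NI²∨_at`. -/
theorem instantiation_overflow_fails :
    ∃ (X : ℕ) (A B C : Fm),
      ¬ Deriv true
          {Fm.all X (.imp (.imp A (.var X)) (.imp (.imp B (.var X)) (.var X)))}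
          (.imp (.imp A C) (.imp (.imp B C) C)) := by
  refine ⟨0, .var 1, .var 2, .or (.var 1) (.var 2), fun h => ?_⟩
  have hs := KM.soundness h (fun n => n == 1) 0 ?_
  · revert hs; decide
  · intro B hB
    rw [Set.mem_singleton_iff] at hB
    subst hB
    decide
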